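/- For every γ ≥ 0 there exists a constant C > 0, independent of N, t and u, such that for every integer N ≥ 2, every t > 0 and every u ∈ ℝ^N: ‖(−A_N)^γ · exp(−A_N² t) · u‖_{l²_N} ≤ C ( t^{−γ/2} e^{−λ_{N,1}² t/2} ‖u‖_{l²_N} + g(γ) |⟨u, φ_{N,0}⟩_{l²_N}| ), where g(0) := 1 and g(x) := 0 for x > 0. -/

import Mathlib

open Real Matrix

/-- `g(0) = 1` and `g(x) = 0` for `x > 0`. -/
noncomputable def gfun : ℝ → ℝ := fun x => if x = 0 then 1 else 0

/-- The finite-difference Neumann Laplacian `A_N = (N²/π²)·T_N`, where `T_N` is tridiagonal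
with diagonal `(-1, -2, …, -2, -1)` and off-diagonal entries `1`. -/
noncomputable def matA (N : ℕ) : Matrix (Fin N) (Fin N) ℝ :=
  Matrix.of fun i j =>
    ((N : ℝ) ^ 2 / Real.pi ^ 2) *
      (if (i : ℕ) = (j : ℕ) then (if (i : ℕ) = 0 ∨ (i : ℕ) = N - 1 then -1 else -2)
       else if (i : ℕ) + 1 = (j : ℕ) ∨ (j : ℕ) + 1 = (i : ℕ) then 1 else 0)

/-- The eigenvalues `λ_{N,j} = (4N²/π²)·sin²(jπ/(2N))` of `-A_N`. -/
noncomputable def lamN (N j : ℕ) : ℝ :=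
  4 * (N : ℝ) ^ 2 / Real.pi ^ 2 * Real.sin ((j : ℝ) * Real.pi / (2 * N)) ^ 2

/-- The discrete `l²_N`-norm `‖u‖ = ((1/N) Σ u_i²)^{1/2}`. -/
noncomputable def lN2norm (N : ℕ) (u : Fin N → ℝ) : ℝ :=
  Real.sqrt ((1 / (N : ℝ)) * ∑ i, (u i) ^ 2)

lemma gfun_nonneg (γ : ℝ) : 0 ≤ gfun γ := by unfold gfun; split <;> norm_num

noncomputable def wvec (N j : ℕ) : Fin N → ℝ :=
  fun i => Real.cos ((2 * ((i : ℕ) : ℝ) + 1) * ((j : ℝ) * Real.pi / (2 * N)))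

lemma matA_apply {N : ℕ} (i k : Fin N) :
    matA N i k = ((N : ℝ) ^ 2 / Real.pi ^ 2) *
      (if (i : ℕ) = (k : ℕ) then (if (i : ℕ) = 0 ∨ (i : ℕ) = N - 1 then -1 else -2)
       else if (i : ℕ) + 1 = (k : ℕ) ∨ (k : ℕ) + 1 = (i : ℕ) then 1 else 0) := rfl

/-- generic: row of matA times v, as a two/three term sum -/
lemma mulVec_eq_sum {N : ℕ} (M : Matrix (Fin N) (Fin N) ℝ) (v : Fin N → ℝ) (i : Fin N) :
    (M *ᵥ v) i = ∑ k, M i k * v k := rfl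

lemma row_two {N : ℕ} (f : Fin N → ℝ) (a b : Fin N) (hab : a ≠ b) (x y : ℝ)
    (ha : f a = x) (hb : f b = y) (h : ∀ k, k ≠ a → k ≠ b → f k = 0) :
    ∑ k, f k = x + y := by
  have : ∀ k : Fin N, f k = (if k = a then x else 0) + (if k = b then y else 0) := by
    intro k
    by_cases h1 : k = a
    · subst h1; rw [if_pos rfl, if_neg hab, ha]; ring
    · by_cases h2 : k = b
      · subst h2; rw [if_neg h1, if_pos rfl, hb]; ring
      · rw [if_neg h1, if_neg h2, h k h1 h2]; ring
  rw [Finset.sum_congr rfl (fun k _ => this k), Finset.sum_add_distrib]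
  simp

lemma row_three {N : ℕ} (f : Fin N → ℝ) (a b c : Fin N) (hab : a ≠ b) (hac : a ≠ c)
    (hbc : b ≠ c) (x y z : ℝ)
    (ha : f a = x) (hb : f b = y) (hc : f c = z)
    (h : ∀ k, k ≠ a → k ≠ b → k ≠ c → f k = 0) :
    ∑ k, f k = x + y + z := by
  have : ∀ k : Fin N, f k = (if k = a then x else 0) + (if k = b then y else 0)
      + (if k = c then z else 0) := by
    intro k
    by_cases h1 : k = a
    · subst h1; rw [if_pos rfl, if_neg hab, if_neg hac, ha]; ring
    · by_cases h2 : k = b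
      · subst h2; rw [if_neg h1, if_pos rfl, if_neg hbc, hb]; ring
      · by_cases h3 : k = c
        · subst h3; rw [if_neg h1, if_neg h2, if_pos rfl, hc]; ring
        · rw [if_neg h1, if_neg h2, if_neg h3, h k h1 h2 h3]; ring
  rw [Finset.sum_congr rfl (fun k _ => this k), Finset.sum_add_distrib, Finset.sum_add_distrib]
  simp

lemma mulVec_matA_zero {N : ℕ} (hN : 2 ≤ N) (v : Fin N → ℝ) (i : Fin N) (hi : (i : ℕ) = 0) :
    (matA N *ᵥ v) i = ((N : ℝ) ^ 2 / Real.pi ^ 2) * (-(v i) + v ⟨1, by omega⟩) := by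
  set i1 : Fin N := ⟨1, by omega⟩ with hi1def
  have hi1 : (i1 : ℕ) = 1 := rfl
  rw [mulVec_eq_sum]
  rw [row_two (fun k => matA N i k * v k) i i1
    (fun h => by rw [Fin.ext_iff] at h; omega)
    (((N : ℝ) ^ 2 / Real.pi ^ 2) * (-1) * v i)
    (((N : ℝ) ^ 2 / Real.pi ^ 2) * 1 * v i1)
    (by show matA N i i * v i = _
        rw [matA_apply, if_pos rfl, if_pos (Or.inl hi)])
    (by show matA N i i1 * v i1 = _
        rw [matA_apply, if_neg (by omega), if_pos (by omega)])
    (by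
      intro k h1 h2
      have hk1 : (k : ℕ) ≠ (i : ℕ) := fun hh => h1 (Fin.ext hh)
      have hk2 : (k : ℕ) ≠ (i1 : ℕ) := fun hh => h2 (Fin.ext hh)
      show matA N i k * v k = 0
      rw [matA_apply, if_neg (by omega), if_neg (by omega)]
      ring)]
  ring

lemma mulVec_matA_last {N : ℕ} (hN : 2 ≤ N) (v : Fin N → ℝ) (i : Fin N) (hi : (i : ℕ) = N - 1) :
    (matA N *ᵥ v) i = ((N : ℝ) ^ 2 / Real.pi ^ 2) * (-(v i) + v ⟨N - 2, by omega⟩) := by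
  set i1 : Fin N := ⟨N - 2, by omega⟩ with hi1def
  have hi1 : (i1 : ℕ) = N - 2 := rfl
  rw [mulVec_eq_sum]
  rw [row_two (fun k => matA N i k * v k) i i1
    (fun h => by rw [Fin.ext_iff] at h; omega)
    (((N : ℝ) ^ 2 / Real.pi ^ 2) * (-1) * v i)
    (((N : ℝ) ^ 2 / Real.pi ^ 2) * 1 * v i1)
    (by show matA N i i * v i = _
        rw [matA_apply, if_pos rfl, if_pos (Or.inr hi)])
    (by show matA N i i1 * v i1 = _
        rw [matA_apply, if_neg (by omega), if_pos (by omega)])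
    (by
      intro k h1 h2
      have hk1 : (k : ℕ) ≠ (i : ℕ) := fun hh => h1 (Fin.ext hh)
      have hk2 : (k : ℕ) ≠ (i1 : ℕ) := fun hh => h2 (Fin.ext hh)
      show matA N i k * v k = 0
      rw [matA_apply, if_neg (by omega), if_neg (by omega)]
      ring)]
  ring

lemma mulVec_matA_mid {N : ℕ} (hN : 2 ≤ N) (v : Fin N → ℝ) (i : Fin N)
    (hi0 : (i : ℕ) ≠ 0) (hil : (i : ℕ) ≠ N - 1) :
    (matA N *ᵥ v) i = ((N : ℝ) ^ 2 / Real.pi ^ 2) *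
      (v ⟨(i : ℕ) - 1, by omega⟩ - 2 * v i + v ⟨(i : ℕ) + 1, by omega⟩) := by
  set im : Fin N := ⟨(i : ℕ) - 1, by omega⟩ with himdef
  set ip : Fin N := ⟨(i : ℕ) + 1, by omega⟩ with hipdef
  have him : (im : ℕ) = (i : ℕ) - 1 := rfl
  have hip : (ip : ℕ) = (i : ℕ) + 1 := rfl
  rw [mulVec_eq_sum]
  rw [row_three (fun k => matA N i k * v k) i im ip
    (fun h => by rw [Fin.ext_iff] at h; omega)
    (fun h => by rw [Fin.ext_iff] at h; omega)
    (fun h => by rw [Fin.ext_iff] at h; omega)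
    (((N : ℝ) ^ 2 / Real.pi ^ 2) * (-2) * v i)
    (((N : ℝ) ^ 2 / Real.pi ^ 2) * 1 * v im)
    (((N : ℝ) ^ 2 / Real.pi ^ 2) * 1 * v ip)
    (by show matA N i i * v i = _
        rw [matA_apply, if_pos rfl, if_neg (by omega)])
    (by show matA N i im * v im = _
        rw [matA_apply, if_neg (by omega), if_pos (by omega)])
    (by show matA N i ip * v ip = _
        rw [matA_apply, if_neg (by omega), if_pos (by omega)])
    (by
      intro k h1 h2 h3
      have hk1 : (k : ℕ) ≠ (i : ℕ) := fun hh => h1 (Fin.ext hh)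
      have hk2 : (k : ℕ) ≠ (im : ℕ) := fun hh => h2 (Fin.ext hh)
      have hk3 : (k : ℕ) ≠ (ip : ℕ) := fun hh => h3 (Fin.ext hh)
      show matA N i k * v k = 0
      rw [matA_apply, if_neg (by omega), if_neg (by omega)]
      ring)]
  ring

lemma trig_zero (a : ℝ) : -Real.cos a + Real.cos (3 * a) = -4 * Real.sin a ^ 2 * Real.cos a := by
  rw [Real.cos_three_mul, Real.sin_sq]; ring

lemma trig_mid (x a : ℝ) : Real.cos (x - 2 * a) + Real.cos (x + 2 * a) - 2 * Real.cos x
    = -4 * Real.sin a ^ 2 * Real.cos x := by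
  rw [Real.cos_sub, Real.cos_add, Real.cos_two_mul, Real.sin_sq]; ring

lemma trig_last (x a : ℝ) (hx : Real.sin x = 0) :
    -Real.cos (x - a) + Real.cos (x - 3 * a) = -4 * Real.sin a ^ 2 * Real.cos (x - a) := by
  rw [Real.cos_sub, Real.cos_sub, Real.cos_three_mul, Real.sin_sq, hx]; ring

lemma eig {N : ℕ} (hN : 2 ≤ N) (j : ℕ) :
    (-(matA N)) *ᵥ wvec N j = lamN N j • wvec N j := by
  have hN0 : (0:ℝ) < (N : ℝ) := by positivity
  funext i
  rw [Matrix.neg_mulVec, Pi.neg_apply, Pi.smul_apply, smul_eq_mul]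
  set a : ℝ := (j : ℝ) * Real.pi / (2 * N) with ha
  have hlam : lamN N j = 4 * (N : ℝ) ^ 2 / Real.pi ^ 2 * Real.sin a ^ 2 := rfl
  have hw : ∀ k : Fin N, wvec N j k = Real.cos ((2 * ((k : ℕ) : ℝ) + 1) * a) := fun k => rfl
  by_cases hi0 : (i : ℕ) = 0
  · rw [mulVec_matA_zero hN _ i hi0, hlam, hw, hw]
    have h1 : ((((⟨1, by omega⟩ : Fin N) : ℕ)) : ℝ) = 1 := by norm_num
    rw [h1, hi0]
    have e1 : (2 * ((0:ℕ):ℝ) + 1) * a = a := by push_cast; ring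
    have e2 : (2 * (1:ℝ) + 1) * a = 3 * a := by ring
    rw [e1, e2]
    linear_combination (-((N:ℝ)^2 / Real.pi^2)) * trig_zero a
  · by_cases hil : (i : ℕ) = N - 1
    · rw [mulVec_matA_last hN _ i hil, hlam, hw, hw]
      have h2 : ((((⟨N - 2, by omega⟩ : Fin N) : ℕ)) : ℝ) = (N : ℝ) - 2 := by
        simp only [Fin.val_mk]
        push_cast [Nat.cast_sub (by omega : 2 ≤ N)]
        ring
      have h1 : (((i : ℕ)) : ℝ) = (N : ℝ) - 1 := by
        rw [hil]
        push_cast [Nat.cast_sub (by omega : 1 ≤ N)]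
        ring
      rw [h1, h2]
      set x : ℝ := 2 * (N : ℝ) * a with hx
      have hsin : Real.sin x = 0 := by
        have : x = (j : ℝ) * Real.pi := by
          rw [hx, ha]; field_simp
        rw [this]
        exact_mod_cast Real.sin_nat_mul_pi j
      have e1 : (2 * ((N:ℝ) - 1) + 1) * a = x - a := by rw [hx]; ring
      have e2 : (2 * ((N:ℝ) - 2) + 1) * a = x - 3 * a := by rw [hx]; ring
      rw [e1, e2]
      linear_combination (-((N:ℝ)^2 / Real.pi^2)) * trig_last x a hsin
    · rw [mulVec_matA_mid hN _ i hi0 hil, hlam, hw, hw, hw]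
      have hi1 : 1 ≤ (i : ℕ) := by omega
      have h2 : ((((⟨(i : ℕ) - 1, by omega⟩ : Fin N) : ℕ)) : ℝ) = ((i : ℕ) : ℝ) - 1 := by
        simp only [Fin.val_mk]
        push_cast [Nat.cast_sub hi1]
        ring
      have h3 : ((((⟨(i : ℕ) + 1, by omega⟩ : Fin N) : ℕ)) : ℝ) = ((i : ℕ) : ℝ) + 1 := by
        simp only [Fin.val_mk]
        push_cast
        ring
      rw [h2, h3]
      set x : ℝ := (2 * ((i : ℕ) : ℝ) + 1) * a with hx
      have e1 : (2 * (((i : ℕ) : ℝ) - 1) + 1) * a = x - 2 * a := by rw [hx]; ring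
      have e2 : (2 * (((i : ℕ) : ℝ) + 1) + 1) * a = x + 2 * a := by rw [hx]; ring
      rw [e1, e2]
      linear_combination (-((N:ℝ)^2 / Real.pi^2)) * trig_mid x a

lemma theta_mem {N : ℕ} (hN : 2 ≤ N) {m : ℕ} (hm : m ≤ N) :
    0 ≤ (m : ℝ) * Real.pi / (2 * N) ∧ (m : ℝ) * Real.pi / (2 * N) ≤ Real.pi / 2 := by
  have hπ := Real.pi_pos
  have hN0 : (0 : ℝ) < N := by positivity
  constructor
  · positivity
  · rw [div_le_div_iff₀ (by positivity) (by norm_num)]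
    have : (m : ℝ) ≤ N := by exact_mod_cast hm
    nlinarith

lemma lamN_strictMono {N : ℕ} (hN : 2 ≤ N) {j k : ℕ} (hjk : j < k) (hkN : k ≤ N) :
    lamN N j < lamN N k := by
  have hπ := Real.pi_pos
  have hN0 : (0 : ℝ) < N := by positivity
  have hj := theta_mem hN (le_trans (Nat.le_of_lt hjk) hkN)
  have hk := theta_mem hN hkN
  have hθ : (j : ℝ) * Real.pi / (2 * N) < (k : ℝ) * Real.pi / (2 * N) := by
    have : (j : ℝ) < k := by exact_mod_cast hjk
    gcongr
  have hsin : Real.sin ((j : ℝ) * Real.pi / (2 * N)) < Real.sin ((k : ℝ) * Real.pi / (2 * N)) :=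
    Real.strictMonoOn_sin
      ⟨by linarith [hj.1], by linarith [hj.2]⟩ ⟨by linarith [hk.1], by linarith [hk.2]⟩ hθ
  have hsj : 0 ≤ Real.sin ((j : ℝ) * Real.pi / (2 * N)) :=
    Real.sin_nonneg_of_nonneg_of_le_pi (hj.1) (by linarith [hj.2])
  have hsq : Real.sin ((j : ℝ) * Real.pi / (2 * N)) ^ 2
      < Real.sin ((k : ℝ) * Real.pi / (2 * N)) ^ 2 := by nlinarith
  have hc : (0 : ℝ) < 4 * (N : ℝ) ^ 2 / Real.pi ^ 2 := by positivity
  unfold lamN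
  calc 4 * (N : ℝ) ^ 2 / Real.pi ^ 2 * Real.sin ((j : ℝ) * Real.pi / (2 * N)) ^ 2
      < 4 * (N : ℝ) ^ 2 / Real.pi ^ 2 * Real.sin ((k : ℝ) * Real.pi / (2 * N)) ^ 2 := by
        exact (mul_lt_mul_iff_right₀ hc).mpr hsq
    _ = _ := rfl

lemma lamN_zero {N : ℕ} : lamN N 0 = 0 := by simp [lamN]

lemma lamN_pos {N : ℕ} (hN : 2 ≤ N) {j : ℕ} (hj : 1 ≤ j) (hjN : j ≤ N) : 0 < lamN N j := by
  have := lamN_strictMono hN (show 0 < j from hj) hjN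
  rwa [lamN_zero] at this

lemma lamN_one_le {N : ℕ} (hN : 2 ≤ N) {j : ℕ} (hj : 1 ≤ j) (hjN : j ≤ N) :
    lamN N 1 ≤ lamN N j := by
  rcases eq_or_lt_of_le hj with h | h
  · rw [← h]
  · exact le_of_lt (lamN_strictMono hN h hjN)

lemma wvec_ne_zero {N : ℕ} (hN : 2 ≤ N) {j : ℕ} (hj : j < N) : wvec N j ≠ 0 := by
  have hπ := Real.pi_pos
  have hN0 : (0 : ℝ) < N := by positivity
  intro h
  have h0 : wvec N j ⟨0, by omega⟩ = 0 := by rw [h]; rfl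
  have hval : ((((⟨0, by omega⟩ : Fin N) : ℕ)) : ℝ) = 0 := by norm_num
  have : wvec N j ⟨0, by omega⟩ = Real.cos ((j : ℝ) * Real.pi / (2 * N)) := by
    unfold wvec
    rw [hval]
    norm_num
  rw [this] at h0
  have hcos : 0 < Real.cos ((j : ℝ) * Real.pi / (2 * N)) := by
    apply Real.cos_pos_of_mem_Ioo
    constructor
    · have := (theta_mem hN (le_of_lt hj)).1; linarith
    · rw [div_lt_div_iff₀ (by positivity) (by norm_num)]
      have : (j : ℝ) < N := by exact_mod_cast hj
      nlinarith
  linarith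

section spectral

lemma wvec_zero {N : ℕ} : wvec N 0 = fun _ => (1 : ℝ) := by
  funext i
  simp [wvec]

lemma eigen_coords {N : ℕ} (hN : 2 ≤ N) {x : Fin N → ℝ} {μ0 : ℝ}
    (hev : (-(matA N)) *ᵥ x = μ0 • x) :
    ∃ c : Fin N → ℝ, x = ∑ j : Fin N, c j • wvec N (j : ℕ)
      ∧ ∀ j : Fin N, c j * lamN N (j : ℕ) = μ0 * c j := by
  haveI : Nonempty (Fin N) := ⟨⟨0, by omega⟩⟩
  set W : Fin N → (Fin N → ℝ) := fun j => wvec N (j : ℕ) with hW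
  have hinj : Function.Injective (fun j : Fin N => lamN N (j : ℕ)) := by
    intro j k hjk
    simp only at hjk
    by_contra hne
    have hne' : (j : ℕ) ≠ (k : ℕ) := fun h => hne (Fin.ext h)
    rcases hne'.lt_or_gt with h | h
    · exact absurd hjk (ne_of_lt (lamN_strictMono hN h (by omega)))
    · exact absurd hjk.symm (ne_of_lt (lamN_strictMono hN h (by omega)))
  have hLI : LinearIndependent ℝ W := by
    apply Module.End.eigenvectors_linearIndependent' (Matrix.mulVecLin (-(matA N)))
      (fun j : Fin N => lamN N (j : ℕ)) hinj
    intro j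
    constructor
    · rw [Module.End.mem_eigenspace_iff, Matrix.mulVecLin_apply]
      exact eig hN (j : ℕ)
    · exact wvec_ne_zero hN j.isLt
  have hcard : Fintype.card (Fin N) = Module.finrank ℝ (Fin N → ℝ) := by simp
  set B := basisOfLinearIndependentOfCardEqFinrank hLI hcard with hB
  have hBW : ⇑B = W := coe_basisOfLinearIndependentOfCardEqFinrank hLI hcard
  set c : Fin N → ℝ := fun j => B.repr x j with hc
  have hxsum : x = ∑ j, c j • W j := by
    conv_lhs => rw [← B.sum_repr x]
    rw [hBW]
  have happly : (-(matA N)) *ᵥ x = ∑ j, (c j * lamN N (j : ℕ)) • W j := by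
    conv_lhs => rw [hxsum]
    rw [← Matrix.mulVecLin_apply, map_sum]
    refine Finset.sum_congr rfl fun j _ => ?_
    rw [LinearMap.map_smul, Matrix.mulVecLin_apply, eig hN (j : ℕ), smul_smul]
  have hsmul : μ0 • x = ∑ j, (μ0 * c j) • W j := by
    conv_lhs => rw [hxsum]
    rw [Finset.smul_sum]
    refine Finset.sum_congr rfl fun j _ => ?_
    rw [smul_smul]
  refine ⟨c, hxsum, ?_⟩
  have hrepr1 : ⇑(B.repr ((-(matA N)) *ᵥ x)) = fun j => c j * lamN N (j : ℕ) := by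
    rw [happly, ← hBW]
    exact B.repr_sum_self _
  have hrepr2 : ⇑(B.repr (μ0 • x)) = fun j => μ0 * c j := by
    rw [hsmul, ← hBW]
    exact B.repr_sum_self _
  intro j
  have := congrFun (hrepr1.symm.trans (by rw [hev, hrepr2])) j
  simpa using this

lemma eigen_mem {N : ℕ} (hN : 2 ≤ N) {x : Fin N → ℝ} {μ0 : ℝ} (hx : x ≠ 0)
    (hev : (-(matA N)) *ᵥ x = μ0 • x) : ∃ j : Fin N, μ0 = lamN N (j : ℕ) := by
  obtain ⟨c, hxsum, hcoord⟩ := eigen_coords hN hev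
  obtain ⟨j, hj⟩ : ∃ j : Fin N, c j ≠ 0 := by
    by_contra h
    push_neg at h
    exact hx (by rw [hxsum]; simp [h])
  refine ⟨j, ?_⟩
  have h1 : lamN N (j : ℕ) * c j = μ0 * c j := by rw [mul_comm (lamN N (j : ℕ))]; exact hcoord j
  exact (mul_right_cancel₀ hj h1).symm

lemma ker_const {N : ℕ} (hN : 2 ≤ N) {x : Fin N → ℝ}
    (hev : (-(matA N)) *ᵥ x = 0) : ∃ cc : ℝ, x = fun _ => cc := by
  have hev' : (-(matA N)) *ᵥ x = (0 : ℝ) • x := by rw [hev, zero_smul]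
  obtain ⟨c, hxsum, hcoord⟩ := eigen_coords hN hev'
  refine ⟨c ⟨0, by omega⟩, ?_⟩
  have hzero : ∀ j : Fin N, j ≠ ⟨0, by omega⟩ → c j = 0 := by
    intro j hj
    have hj1 : 1 ≤ (j : ℕ) := by
      by_contra h
      exact hj (Fin.ext (by simpa using (by omega : (j : ℕ) = 0)))
    have hpos : 0 < lamN N (j : ℕ) := lamN_pos hN hj1 (by omega)
    have := hcoord j
    rw [zero_mul] at this
    rcases mul_eq_zero.mp this with h | h
    · exact h
    · exact absurd h (ne_of_gt hpos)
  rw [hxsum, Finset.sum_eq_single ⟨0, by omega⟩ (fun j _ hj => by rw [hzero j hj, zero_smul])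
    (fun h => absurd (Finset.mem_univ _) h)]
  funext i
  simp [wvec_zero]

end spectral

lemma orth_sum_sq {N : ℕ} (U : Matrix (Fin N) (Fin N) ℝ) (hU : Uᵀ * U = 1) (x : Fin N → ℝ) :
    ∑ i, (U *ᵥ x) i ^ 2 = ∑ i, x i ^ 2 := by
  have h1 : ∑ i, (U *ᵥ x) i ^ 2 = (U *ᵥ x) ⬝ᵥ (U *ᵥ x) := by
    simp [dotProduct, sq]
  have h2 : ∑ i, x i ^ 2 = x ⬝ᵥ x := by simp [dotProduct, sq]
  rw [h1, h2, Matrix.dotProduct_mulVec, ← Matrix.mulVec_transpose, Matrix.mulVec_mulVec, hU,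
    Matrix.one_mulVec]

lemma rpow_exp_bound {γ : ℝ} (hγ : 0 ≤ γ) {s : ℝ} (hs : 0 < s) :
    s ^ γ * Real.exp (-(s ^ 2) / 2) ≤ Real.exp (γ ^ 2 / 2) := by
  rw [Real.rpow_def_of_pos hs, ← Real.exp_add]
  apply Real.exp_le_exp.mpr
  have hlog := Real.log_le_sub_one_of_pos hs
  nlinarith [sq_nonneg (s - γ), mul_le_mul_of_nonneg_left hlog hγ]

lemma hmode_bound {γ t μ l1 : ℝ} (hγ : 0 ≤ γ) (ht : 0 < t) (hl : 0 < l1) (hμ : l1 ≤ μ) :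
    μ ^ γ * Real.exp (-t * μ ^ 2)
      ≤ Real.exp (γ ^ 2 / 2) * (t ^ (-γ / 2) * Real.exp (-(l1 ^ 2) * t / 2)) := by
  have hμ0 : 0 < μ := lt_of_lt_of_le hl hμ
  set s : ℝ := Real.sqrt t * μ with hsdef
  have hs : 0 < s := by positivity
  have hsq : s ^ 2 = t * μ ^ 2 := by
    rw [hsdef, mul_pow, Real.sq_sqrt ht.le]
  have hsplit : μ ^ γ = t ^ (-γ / 2) * s ^ γ := by
    rw [hsdef, Real.mul_rpow (Real.sqrt_nonneg t) hμ0.le]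
    have h1 : Real.sqrt t ^ γ = t ^ (γ / 2) := by
      rw [Real.sqrt_eq_rpow, ← Real.rpow_mul ht.le, show (1 / 2 * γ) = γ / 2 by ring]
    rw [h1, ← mul_assoc, ← Real.rpow_add ht, show -γ / 2 + γ / 2 = 0 by ring, Real.rpow_zero,
      one_mul]
  have hexp : Real.exp (-t * μ ^ 2) = Real.exp (-(s ^ 2) / 2) * Real.exp (-t * μ ^ 2 / 2) := by
    rw [← Real.exp_add, hsq]
    ring_nf
  have h2 : Real.exp (-t * μ ^ 2 / 2) ≤ Real.exp (-(l1 ^ 2) * t / 2) := by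
    apply Real.exp_le_exp.mpr
    have hsq2 : l1 ^ 2 ≤ μ ^ 2 := by nlinarith
    nlinarith [mul_le_mul_of_nonneg_left hsq2 ht.le]
  have h3 : s ^ γ * Real.exp (-(s ^ 2) / 2) ≤ Real.exp (γ ^ 2 / 2) := rpow_exp_bound hγ hs
  have ht' : (0 : ℝ) < t ^ (-γ / 2) := Real.rpow_pos_of_pos ht _
  calc μ ^ γ * Real.exp (-t * μ ^ 2)
      = t ^ (-γ / 2) * (s ^ γ * Real.exp (-(s ^ 2) / 2)) * Real.exp (-t * μ ^ 2 / 2) := by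
        rw [hsplit, hexp]; ring
    _ ≤ t ^ (-γ / 2) * Real.exp (γ ^ 2 / 2) * Real.exp (-(l1 ^ 2) * t / 2) := by
        apply mul_le_mul
        · exact mul_le_mul_of_nonneg_left h3 ht'.le
        · exact h2
        · positivity
        · positivity
    _ = Real.exp (γ ^ 2 / 2) * (t ^ (-γ / 2) * Real.exp (-(l1 ^ 2) * t / 2)) := by ring

lemma sqrt_add_le (a b : ℝ) (ha : 0 ≤ a) (hb : 0 ≤ b) :
    Real.sqrt (a + b) ≤ Real.sqrt a + Real.sqrt b := by
  have h : a + b ≤ (Real.sqrt a + Real.sqrt b) ^ 2 := by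
    nlinarith [Real.sq_sqrt ha, Real.sq_sqrt hb, Real.sqrt_nonneg a, Real.sqrt_nonneg b]
  calc Real.sqrt (a + b) ≤ Real.sqrt ((Real.sqrt a + Real.sqrt b) ^ 2) := Real.sqrt_le_sqrt h
    _ = Real.sqrt a + Real.sqrt b := Real.sqrt_sq (by positivity)

set_option maxHeartbeats 2000000 in
/-- Discrete smoothing estimate
`‖(-A_N)^γ e^{-A_N² t} u‖_{l²_N} ≤ C (t^{-γ/2} e^{-λ_{N,1}² t/2} ‖u‖_{l²_N} + g(γ)|⟨u,φ_{N,0}⟩|)`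
(Lemma 4.1, inequality (4.4)); `(-A_N)^γ` is the spectral power of the symmetric positive
semidefinite matrix `-A_N` (with `0⁰ = 1`) and `exp` is the matrix exponential. -/
theorem stmt5 (γ : ℝ) (hγ : 0 ≤ γ) :
    ∃ C : ℝ, 0 < C ∧ ∀ N : ℕ, 2 ≤ N → ∀ hA : (-(matA N)).IsHermitian,
      ∀ t : ℝ, 0 < t → ∀ u : Fin N → ℝ,
      lN2norm N (((hA.cfc fun x : ℝ => x ^ γ) * NormedSpace.exp ((-t) • (matA N ^ 2))).mulVec u)
        ≤ C * (t ^ (-γ / 2) * Real.exp (-(lamN N 1) ^ 2 * t / 2) * lN2norm N u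
            + gfun γ * |(1 / (N : ℝ)) * ∑ i, u i * Real.sqrt (1 / Real.pi)|) := by
  have hπ := Real.pi_pos
  refine ⟨Real.exp (γ ^ 2 / 2) + Real.sqrt Real.pi + 1, by positivity, ?_⟩
  intro N hN hA t ht u
  have hN0 : (0 : ℝ) < N := by
    have : (2 : ℝ) ≤ N := by exact_mod_cast hN
    linarith
  set U : Matrix (Fin N) (Fin N) ℝ := (hA.eigenvectorUnitary : Matrix (Fin N) (Fin N) ℝ)
    with hUdef
  set μ : Fin N → ℝ := hA.eigenvalues with hμdef
  have hUnit : star U * U = 1 := Unitary.coe_star_mul_self _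
  have hUnit2 : U * star U = 1 := Unitary.coe_mul_star_self _
  have hstar : star U = Uᵀ := by
    rw [Matrix.star_eq_conjTranspose, Matrix.conjTranspose_eq_transpose_of_trivial]
  -- column orthonormality
  have hortho : ∀ i i' : Fin N, (∑ k, U k i * U k i') = if i = i' then 1 else 0 := by
    intro i i'
    have h1 := congrFun (congrFun hUnit i) i'
    rw [Matrix.mul_apply] at h1
    simp only [hstar, Matrix.transpose_apply] at h1
    rw [h1, Matrix.one_apply]
  -- columns are eigenvectors
  have hcol : ∀ i : Fin N, (-(matA N)) *ᵥ (fun k => U k i) = μ i • (fun k => U k i) :=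
    fun i => hA.mulVec_eigenvectorBasis i
  have hcolne : ∀ i : Fin N, (fun k => U k i) ≠ 0 := by
    intro i h
    have h2 : ∑ k, U k i * U k i = 1 := by simpa using hortho i i
    have h3 : ∀ k, U k i = 0 := fun k => congrFun h k
    rw [Finset.sum_congr rfl (fun k _ => by rw [h3 k, mul_zero])] at h2
    simp at h2
  have hμmem : ∀ i : Fin N, ∃ j : Fin N, μ i = lamN N (j : ℕ) :=
    fun i => eigen_mem hN (hcolne i) (hcol i)
  have hl1pos : 0 < lamN N 1 := lamN_pos hN le_rfl (by omega)
  have hμalt : ∀ i, μ i = 0 ∨ lamN N 1 ≤ μ i := by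
    intro i
    obtain ⟨j, hj⟩ := hμmem i
    rcases Nat.eq_zero_or_pos (j : ℕ) with h0 | h1
    · left; rw [hj, h0, lamN_zero]
    · right; rw [hj]; exact lamN_one_le hN h1 (by omega)
  have hμnonneg : ∀ i, 0 ≤ μ i := by
    intro i
    rcases hμalt i with h | h
    · rw [h]
    · linarith
  -- zero columns are constant
  have hzerocol : ∀ i : Fin N, μ i = 0 → ∃ c : ℝ, (∀ k, U k i = c) ∧ c ^ 2 * N = 1 := by
    intro i hi
    have h0 : (-(matA N)) *ᵥ (fun k => U k i) = 0 := by rw [hcol i, hi, zero_smul]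
    obtain ⟨c, hc⟩ := ker_const hN h0
    refine ⟨c, fun k => congrFun hc k, ?_⟩
    have h2 : ∑ k, U k i * U k i = 1 := by simpa using hortho i i
    rw [Finset.sum_congr rfl (fun k _ => by rw [congrFun hc k])] at h2
    rw [Finset.sum_const, Finset.card_univ, Fintype.card_fin, nsmul_eq_mul] at h2
    nlinarith [h2]
  have hzero_unique : ∀ i i' : Fin N, μ i = 0 → μ i' = 0 → i = i' := by
    intro i i' hi hi'
    by_contra hne
    obtain ⟨c, hc, hcn⟩ := hzerocol i hi
    obtain ⟨c', hc', hcn'⟩ := hzerocol i' hi'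
    have h0 : ∑ k, U k i * U k i' = 0 := by rw [hortho, if_neg hne]
    rw [Finset.sum_congr rfl (fun k _ => by rw [hc k, hc' k])] at h0
    rw [Finset.sum_const, Finset.card_univ, Fintype.card_fin, nsmul_eq_mul] at h0
    nlinarith [h0, hcn, hcn']
  -- matrix decompositions
  have hS : -(matA N) = U * Matrix.diagonal μ * star U := by
    conv_lhs => rw [hA.spectral_theorem]
    congr 1
  have hUinv : U⁻¹ = star U := Matrix.inv_eq_left_inv hUnit
  have hUisUnit : IsUnit U := ⟨⟨U, star U, hUnit2, hUnit⟩, rfl⟩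
  have hDD : (U * Matrix.diagonal μ * star U) * (U * Matrix.diagonal μ * star U)
      = U * Matrix.diagonal (fun i => μ i ^ 2) * star U := by
    rw [show (U * Matrix.diagonal μ * star U) * (U * Matrix.diagonal μ * star U)
        = U * Matrix.diagonal μ * (star U * U) * (Matrix.diagonal μ * star U) by
      simp only [Matrix.mul_assoc], hUnit, Matrix.mul_one]
    rw [show U * Matrix.diagonal μ * (Matrix.diagonal μ * star U)
        = U * (Matrix.diagonal μ * Matrix.diagonal μ) * star U by simp only [Matrix.mul_assoc],
      Matrix.diagonal_mul_diagonal]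
    congr 2 with i
    ring
  have hsq : (-t) • (matA N ^ 2) = U * Matrix.diagonal (fun i => -t * μ i ^ 2) * star U := by
    rw [← neg_sq (matA N), hS, pow_two, hDD, ← smul_mul_assoc, ← mul_smul_comm]
    congr 2
    rw [← Matrix.diagonal_smul]
    congr 1
  have hexp : NormedSpace.exp ((-t) • (matA N ^ 2))
      = U * Matrix.diagonal (fun i => Real.exp (-t * μ i ^ 2)) * star U := by
    rw [hsq, ← hUinv, Matrix.exp_conj U _ hUisUnit, hUinv, Matrix.exp_diagonal, Pi.exp_def]
    congr 2
    funext i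
    rw [Real.exp_eq_exp_ℝ]
  have hcfc : hA.cfc (fun x : ℝ => x ^ γ) = U * Matrix.diagonal (fun i => μ i ^ γ) * star U := by
    rw [Matrix.IsHermitian.cfc]
    congr 1
  set h : Fin N → ℝ := fun i => μ i ^ γ * Real.exp (-t * μ i ^ 2) with hh
  have hMprod : (hA.cfc fun x : ℝ => x ^ γ) * NormedSpace.exp ((-t) • (matA N ^ 2))
      = U * Matrix.diagonal h * star U := by
    rw [hcfc, hexp]
    rw [show (U * Matrix.diagonal (fun i => μ i ^ γ) * star U)
        * (U * Matrix.diagonal (fun i => Real.exp (-t * μ i ^ 2)) * star U)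
        = U * Matrix.diagonal (fun i => μ i ^ γ) * (star U * U)
          * (Matrix.diagonal (fun i => Real.exp (-t * μ i ^ 2)) * star U) by
      simp only [Matrix.mul_assoc], hUnit, Matrix.mul_one]
    rw [show U * Matrix.diagonal (fun i => μ i ^ γ)
        * (Matrix.diagonal (fun i => Real.exp (-t * μ i ^ 2)) * star U)
        = U * (Matrix.diagonal (fun i => μ i ^ γ)
          * Matrix.diagonal (fun i => Real.exp (-t * μ i ^ 2))) * star U by
      simp only [Matrix.mul_assoc], Matrix.diagonal_mul_diagonal]
  -- vector computations
  set v : Fin N → ℝ := star U *ᵥ u with hv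
  have hMu : (U * Matrix.diagonal h * star U) *ᵥ u = U *ᵥ (Matrix.diagonal h *ᵥ v) := by
    rw [hv, Matrix.mulVec_mulVec, Matrix.mulVec_mulVec]
  have hsum1 : ∑ i, (((U * Matrix.diagonal h * star U) *ᵥ u) i) ^ 2 = ∑ i, (h i * v i) ^ 2 := by
    rw [hMu, orth_sum_sq U (by rw [← hstar]; exact hUnit)]
    exact Finset.sum_congr rfl fun i _ => by rw [Matrix.mulVec_diagonal]
  have hsum2 : ∑ i, v i ^ 2 = ∑ i, u i ^ 2 := by
    rw [hv, hstar]
    exact orth_sum_sq Uᵀ (by rw [Matrix.transpose_transpose, ← hstar]; exact hUnit2) u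
  have hvi : ∀ i, v i = ∑ k, U k i * u k := by
    intro i
    rw [hv, hstar]
    simp [Matrix.mulVec, dotProduct, Matrix.transpose_apply]
  -- estimates on h
  set K : ℝ := Real.exp (γ ^ 2 / 2) * (t ^ (-γ / 2) * Real.exp (-(lamN N 1) ^ 2 * t / 2))
    with hK
  have hKnonneg : 0 ≤ K := by positivity
  have hmode : ∀ i, μ i ≠ 0 → h i ≤ K := by
    intro i hi
    rcases hμalt i with h0 | h1
    · exact absurd h0 hi
    · exact hmode_bound hγ ht hl1pos h1
  have hmode0 : ∀ i, μ i = 0 → h i = gfun γ := by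
    intro i hi
    show μ i ^ γ * Real.exp (-t * μ i ^ 2) = gfun γ
    rw [hi]
    norm_num
    unfold gfun
    by_cases hγ0 : γ = 0
    · rw [if_pos hγ0, hγ0, Real.rpow_zero]
    · rw [if_neg hγ0, Real.zero_rpow hγ0]
  have hhnonneg : ∀ i, 0 ≤ h i := by
    intro i
    have := Real.rpow_nonneg (hμnonneg i) γ
    positivity
  -- split the sum
  have hsplit : ∑ i, (h i * v i) ^ 2
      = ∑ i ∈ Finset.univ.filter (fun i => μ i = 0), (h i * v i) ^ 2
        + ∑ i ∈ Finset.univ.filter (fun i => ¬(μ i = 0)), (h i * v i) ^ 2 :=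
    (Finset.sum_filter_add_sum_filter_not Finset.univ _ _).symm
  have hZpart : ∑ i ∈ Finset.univ.filter (fun i => μ i = 0), (h i * v i) ^ 2
      ≤ gfun γ ^ 2 * ((∑ k, u k) ^ 2 / N) := by
    rcases Finset.eq_empty_or_nonempty (Finset.univ.filter (fun i : Fin N => μ i = 0)) with he | hne
    · rw [he, Finset.sum_empty]
      positivity
    · obtain ⟨i0, hi0⟩ := hne
      have hi0' : μ i0 = 0 := (Finset.mem_filter.mp hi0).2
      have hsingle : Finset.univ.filter (fun i : Fin N => μ i = 0) = {i0} := by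
        apply Finset.eq_singleton_iff_unique_mem.mpr
        exact ⟨hi0, fun j hj => hzero_unique j i0 (Finset.mem_filter.mp hj).2 hi0'⟩
      rw [hsingle, Finset.sum_singleton]
      obtain ⟨c, hc, hcn⟩ := hzerocol i0 hi0'
      have hvc : v i0 = c * ∑ k, u k := by
        rw [hvi i0, Finset.mul_sum]
        exact Finset.sum_congr rfl fun k _ => by rw [hc k]
      rw [hmode0 i0 hi0', hvc]
      have hc2 : c ^ 2 = 1 / N := by
        field_simp
        linarith [hcn]
      have : (gfun γ * (c * ∑ k, u k)) ^ 2 = gfun γ ^ 2 * (c ^ 2 * (∑ k, u k) ^ 2) := by ring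
      rw [this, hc2]
      apply le_of_eq
      ring
  have hZcpart : ∑ i ∈ Finset.univ.filter (fun i => ¬(μ i = 0)), (h i * v i) ^ 2
      ≤ K ^ 2 * ∑ i, v i ^ 2 := by
    calc ∑ i ∈ Finset.univ.filter (fun i => ¬(μ i = 0)), (h i * v i) ^ 2
        ≤ ∑ i ∈ Finset.univ.filter (fun i => ¬(μ i = 0)), K ^ 2 * v i ^ 2 := by
          apply Finset.sum_le_sum
          intro i hi
          have hKi := hmode i (Finset.mem_filter.mp hi).2
          have h1 : (h i * v i) ^ 2 = h i ^ 2 * v i ^ 2 := by ring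
          rw [h1]
          have h2 : h i ^ 2 ≤ K ^ 2 := by nlinarith [hhnonneg i]
          exact mul_le_mul_of_nonneg_right h2 (sq_nonneg _)
      _ ≤ ∑ i, K ^ 2 * v i ^ 2 := by
          apply Finset.sum_le_sum_of_subset_of_nonneg (Finset.filter_subset _ _)
          intro i _ _
          positivity
      _ = K ^ 2 * ∑ i, v i ^ 2 := by rw [Finset.mul_sum]
  -- final assembly
  rw [hMprod]
  unfold lN2norm
  have hmain : (1 / (N : ℝ)) * ∑ i, (((U * Matrix.diagonal h * star U) *ᵥ u) i) ^ 2
      ≤ (gfun γ * |∑ k, u k| / N) ^ 2 + (K * Real.sqrt ((1 / N) * ∑ i, u i ^ 2)) ^ 2 := by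
    have h1 : (gfun γ * |∑ k, u k| / (N:ℝ)) ^ 2
        = (1 / (N:ℝ)) * (gfun γ ^ 2 * ((∑ k, u k) ^ 2 / N)) := by
      rw [div_pow, mul_pow, sq_abs]
      ring
    have hx : (0:ℝ) ≤ (1 / (N:ℝ)) * ∑ i, u i ^ 2 := by positivity
    rw [hsum1, hsplit, h1, mul_pow, Real.sq_sqrt hx]
    have hNinv : (0:ℝ) ≤ 1 / (N:ℝ) := by positivity
    have l1 := mul_le_mul_of_nonneg_left hZpart hNinv
    have l2 := mul_le_mul_of_nonneg_left
      (hZcpart.trans (le_of_eq (by rw [hsum2]))) hNinv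
    calc (1 / (N:ℝ)) * (∑ i ∈ Finset.univ.filter (fun i => μ i = 0), (h i * v i) ^ 2
          + ∑ i ∈ Finset.univ.filter (fun i => ¬(μ i = 0)), (h i * v i) ^ 2)
        = (1 / (N:ℝ)) * ∑ i ∈ Finset.univ.filter (fun i => μ i = 0), (h i * v i) ^ 2
          + (1 / (N:ℝ)) * ∑ i ∈ Finset.univ.filter (fun i => ¬(μ i = 0)), (h i * v i) ^ 2 := by
          ring
      _ ≤ (1 / (N:ℝ)) * (gfun γ ^ 2 * ((∑ k, u k) ^ 2 / N))
          + (1 / (N:ℝ)) * (K ^ 2 * ∑ i, u i ^ 2) := add_le_add l1 l2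
      _ = (1 / (N:ℝ)) * (gfun γ ^ 2 * ((∑ k, u k) ^ 2 / N))
          + K ^ 2 * ((1 / (N:ℝ)) * ∑ i, u i ^ 2) := by ring
  have hA0 : (0:ℝ) ≤ gfun γ * |∑ k, u k| / N :=
    div_nonneg (mul_nonneg (gfun_nonneg γ) (abs_nonneg _)) hN0.le
  have hB0 : (0:ℝ) ≤ K * Real.sqrt ((1 / (N:ℝ)) * ∑ i, u i ^ 2) :=
    mul_nonneg hKnonneg (Real.sqrt_nonneg _)
  have hstep : Real.sqrt ((1 / (N:ℝ)) * ∑ i, (((U * Matrix.diagonal h * star U) *ᵥ u) i) ^ 2)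
      ≤ gfun γ * |∑ k, u k| / N + K * Real.sqrt ((1 / (N:ℝ)) * ∑ i, u i ^ 2) := by
    calc Real.sqrt ((1 / (N:ℝ)) * ∑ i, (((U * Matrix.diagonal h * star U) *ᵥ u) i) ^ 2)
        ≤ Real.sqrt ((gfun γ * |∑ k, u k| / N) ^ 2
            + (K * Real.sqrt ((1 / (N:ℝ)) * ∑ i, u i ^ 2)) ^ 2) := Real.sqrt_le_sqrt hmain
      _ ≤ Real.sqrt ((gfun γ * |∑ k, u k| / N) ^ 2)
            + Real.sqrt ((K * Real.sqrt ((1 / (N:ℝ)) * ∑ i, u i ^ 2)) ^ 2) :=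
          sqrt_add_le _ _ (sq_nonneg _) (sq_nonneg _)
      _ = gfun γ * |∑ k, u k| / N + K * Real.sqrt ((1 / (N:ℝ)) * ∑ i, u i ^ 2) := by
          rw [Real.sqrt_sq hA0, Real.sqrt_sq hB0]
  refine hstep.trans ?_
  -- compare with the target right-hand side
  have habs : |(1 / (N:ℝ)) * ∑ i, u i * Real.sqrt (1 / Real.pi)|
      = Real.sqrt (1 / Real.pi) * |∑ k, u k| / N := by
    rw [show ∑ i, u i * Real.sqrt (1 / Real.pi)
        = (∑ i, u i) * Real.sqrt (1 / Real.pi) from (Finset.sum_mul _ _ _).symm]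
    rw [abs_mul, abs_mul, abs_of_nonneg (Real.sqrt_nonneg _),
      abs_of_nonneg (by positivity : (0:ℝ) ≤ 1 / (N:ℝ))]
    ring
  have hsqrtpi : Real.sqrt Real.pi * Real.sqrt (1 / Real.pi) = 1 := by
    rw [← Real.sqrt_mul hπ.le, mul_one_div_cancel (ne_of_gt hπ), Real.sqrt_one]
  set T1 : ℝ := t ^ (-γ / 2) * Real.exp (-(lamN N 1) ^ 2 * t / 2)
      * Real.sqrt ((1 / (N:ℝ)) * ∑ i, u i ^ 2) with hT1
  set T2 : ℝ := gfun γ * |(1 / (N:ℝ)) * ∑ i, u i * Real.sqrt (1 / Real.pi)| with hT2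
  have hT1nn : 0 ≤ T1 := by positivity
  have hT2nn : 0 ≤ T2 := mul_nonneg (gfun_nonneg γ) (abs_nonneg _)
  have hKT : K * Real.sqrt ((1 / (N:ℝ)) * ∑ i, u i ^ 2) = Real.exp (γ ^ 2 / 2) * T1 := by
    rw [hK, hT1]; ring
  have hGT : gfun γ * |∑ k, u k| / N = Real.sqrt Real.pi * T2 := by
    rw [hT2, habs]
    rw [show Real.sqrt Real.pi * (gfun γ * (Real.sqrt (1 / Real.pi) * |∑ k, u k| / N))
        = (Real.sqrt Real.pi * Real.sqrt (1 / Real.pi)) * (gfun γ * |∑ k, u k| / N) by ring,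
      hsqrtpi, one_mul]
  rw [hKT, hGT]
  have hexp1 : 0 < Real.exp (γ ^ 2 / 2) := Real.exp_pos _
  have hsp : 0 ≤ Real.sqrt Real.pi := Real.sqrt_nonneg _
  nlinarith [mul_nonneg hsp hT1nn, mul_nonneg hexp1.le hT2nn, hT1nn, hT2nn]
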